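/- arXiv:2102.02901 — 2 statements merged into one kernel-verified Lean document; each statement's English description precedes it below -/
import Mathlib

section
/- The map ι sending a finite partial function p (given as disjoint finite sets p.ins, p.out ⊆ ℵ₂ × ℕ) to the set of all subsets S of ℵ₂ × ℕ with p.ins ⊆ S and p.out ∩ S = ∅ has image a dense suborder of the regular open algebra RO(2^(ℵ₂ × ℕ)): every ι(p) is a nonempty clopen (hence regular open) set, and every nonzero regular open set contains some ι(p). -/
open Cardinal

/-- A set is regular open if it equals the interior of its closure. -/
def IsRegularOpen {X : Type*} [TopologicalSpace X] (U : Set X) : Prop :=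
  interior (closure U) = U

/-- The underlying type of `ℵ₂`. -/
noncomputable abbrev Aleph2 : Type 1 := (aleph 2).ord.ToType

/-- The Cohen forcing space `2^(ℵ₂ × ℕ)` with the product topology (`2` discrete). -/
abbrev CohenSpace : Type 1 := Aleph2 × ℕ → Bool

/-- The Cohen poset: finite partial functions `ℵ₂ × ℕ → 2`, represented as a
disjoint pair of finite sets (the preimages of `1` and `0`). -/
structure CohenPoset : Type 1 where
  ins : Finset (Aleph2 × ℕ)
  out : Finset (Aleph2 × ℕ)
  H : ins ∩ out = ∅

/-- The canonical embedding of the Cohen poset into the Cohen space: `p` is sent to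
the set of all subsets of `ℵ₂ × ℕ` containing `p.ins` and disjoint from `p.out`. -/
def iota (p : CohenPoset) : Set CohenSpace :=
  {S | (∀ a ∈ p.ins, S a = true) ∧ ∀ a ∈ p.out, S a = false}

/-!
Each `ι p` is cut out by finitely many coordinate conditions `S a = b`, each clopen in the
product of discrete spaces, so `ι p` is clopen. Conversely, a nonzero regular open set `U` is
open and contains some point `x`, hence a basic neighbourhood of `x` fixing finitely many
coordinates; that neighbourhood is `ι` of the restriction of `x` to those coordinates.
-/

open Set

lemma IsRegularOpen.isOpen {X : Type*} [TopologicalSpace X] {U : Set X} (hU : IsRegularOpen U) :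
    IsOpen U :=
  hU ▸ isOpen_interior

lemma IsClopen.isRegularOpen {X : Type*} [TopologicalSpace X] {U : Set X} (hU : IsClopen U) :
    IsRegularOpen U := by
  rw [IsRegularOpen, hU.isClosed.closure_eq, hU.isOpen.interior_eq]

lemma isClopen_setOf_forall_mem_eq {ι X : Type*} [TopologicalSpace X] [DiscreteTopology X]
    (s : Finset ι) (f : ι → X) : IsClopen {S : ι → X | ∀ a ∈ s, S a = f a} := by
  simp only [ofPred_forall]
  exact s.finite_toSet.isClopen_biInter fun a _ =>
    (isClopen_discrete {f a}).preimage (continuous_apply a)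

lemma IsOpen.exists_finset_setOf_forall_mem_eq_subset {ι X : Type*} [TopologicalSpace X]
    {U : Set (ι → X)} (hU : IsOpen U) {x : ι → X} (hx : x ∈ U) :
    ∃ s : Finset ι, {S : ι → X | ∀ a ∈ s, S a = x a} ⊆ U := by
  obtain ⟨s, u, hu, hsub⟩ := isOpen_pi_iff.1 hU x hx
  exact ⟨s, fun S hS => hsub fun a ha => hS a ha ▸ (hu a ha).2⟩

lemma iota_nonempty (p : CohenPoset) : (iota p).Nonempty := by
  have hdisj : Disjoint p.ins p.out := Finset.disjoint_iff_inter_eq_empty.2 p.H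
  refine ⟨fun a => decide (a ∈ p.ins), fun a ha => by simpa using ha, fun a ha => ?_⟩
  simpa using Finset.disjoint_right.1 hdisj ha

lemma isClopen_iota (p : CohenPoset) : IsClopen (iota p) :=
  (isClopen_setOf_forall_mem_eq p.ins fun _ => true).inter
    (isClopen_setOf_forall_mem_eq p.out fun _ => false)

def CohenPoset.restrict (x : CohenSpace) (s : Finset (Aleph2 × ℕ)) : CohenPoset where
  ins := s.filter (x · = true)
  out := s.filter (x · = false)
  H := by
    ext a
    simp +contextual

lemma iota_restrict (x : CohenSpace) (s : Finset (Aleph2 × ℕ)) :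
    iota (CohenPoset.restrict x s) = {S | ∀ a ∈ s, S a = x a} := by
  ext S
  simp only [iota, CohenPoset.restrict, Finset.mem_filter, and_imp, mem_ofPred_eq, ← forall_and]
  refine forall₂_congr fun a _ => ?_
  cases S a <;> cases x a <;> simp

/-- The image of the Cohen poset under `ι` is a dense suborder of the regular open
algebra of `2^(ℵ₂ × ℕ)`: each `ι p` is a nonempty clopen (hence regular open) set,
and every nonzero regular open set contains some `ι p`. -/
theorem cohen_poset_dense :
    (∀ p : CohenPoset, (iota p).Nonempty) ∧
    (∀ p : CohenPoset, IsClopen (iota p)) ∧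
    (∀ p : CohenPoset, IsRegularOpen (iota p)) ∧
    (∀ U : Set CohenSpace, IsRegularOpen U → U.Nonempty →
      ∃ p : CohenPoset, iota p ⊆ U) := by
  refine ⟨iota_nonempty, isClopen_iota, fun p => (isClopen_iota p).isRegularOpen, ?_⟩
  rintro U hU ⟨x, hx⟩
  obtain ⟨s, hs⟩ := hU.isOpen.exists_finset_setOf_forall_mem_eq_subset hx
  exact ⟨CohenPoset.restrict x s, (iota_restrict x s).subset.trans hs⟩
end

section
/- The Boolean-valued axiom of comprehension: for every extensional 𝔹-valued predicate ϕ : bSet 𝔹 → 𝔹 and every x : bSet 𝔹 and context Γ : 𝔹, Γ ≤ ⨆ y, (y ⊆ᴮ x) ⊓ ⨅ z, (z ∈ᴮ y) ⇔ ((z ∈ᴮ x) ⊓ ϕ z). -/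
universe u

/-- Boolean-valued sets over a complete Boolean algebra `𝔹`. -/
inductive bSet (𝔹 : Type u) [CompleteBooleanAlgebra 𝔹] : Type (u + 1)
  | mk (α : Type u) (A : α → bSet 𝔹) (B : α → 𝔹) : bSet 𝔹

namespace bSet

variable {𝔹 : Type u} [CompleteBooleanAlgebra 𝔹]

/-- Boolean-valued equality:
`⟨α,A,B⟩ =ᴮ ⟨α\u0027,A\u0027,B\u0027⟩ := (⨅ a, B a ⟹ ⨆ a\u0027, B\u0027 a\u0027 ⊓ (A a =ᴮ A\u0027 a\u0027)) ⊓ (symmetrically)`. -/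
def bvEq : bSet 𝔹 → bSet 𝔹 → 𝔹
  | ⟨_, A, B⟩, ⟨_, A', B'⟩ =>
      (⨅ a, B a ⇨ ⨆ a', B' a' ⊓ bvEq (A a) (A' a')) ⊓
      (⨅ a', B' a' ⇨ ⨆ a, B a ⊓ bvEq (A a) (A' a'))

/-- Boolean-valued membership: `x ∈ᴮ ⟨α,A,B⟩ := ⨆ a, B a ⊓ (x =ᴮ A a)`. -/
def bvMem (x : bSet 𝔹) : bSet 𝔹 → 𝔹
  | ⟨_, A, B⟩ => ⨆ a, B a ⊓ bvEq x (A a)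

/-- Boolean-valued subset. -/
def bvSubset : bSet 𝔹 → bSet 𝔹 → 𝔹
  | ⟨_, A, B⟩, y => ⨅ a, B a ⇨ bvMem (A a) y

/-- Boolean-valued biimplication. -/
def biimp (a b : 𝔹) : 𝔹 := (a ⇨ b) ⊓ (b ⇨ a)

end bSet


namespace bSet

variable {𝔹 : Type u} [CompleteBooleanAlgebra 𝔹]

lemma bvEq_refl (x : bSet 𝔹) : bvEq x x = ⊤ := by
  induction x with
  | mk α A B ih =>
    refine top_unique (le_inf ?_ ?_) <;>
      · refine le_iInf fun a => ?_
        rw [le_himp_iff, top_inf_eq]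
        exact le_iSup_of_le a (by rw [ih a]; simp)

lemma bvEq_symm : ∀ x y : bSet 𝔹, bvEq x y = bvEq y x
  | ⟨α, A, B⟩, ⟨α', A', B'⟩ => by
    simp only [bvEq]
    rw [inf_comm]
    exact congrArg₂ (· ⊓ ·)
      (iInf_congr fun a' => congrArg _ (iSup_congr fun a => by
        rw [bvEq_symm (A a) (A' a')]))
      (iInf_congr fun a => congrArg _ (iSup_congr fun a' => by
        rw [bvEq_symm (A a) (A' a')]))

end bSet

open bSet in
/-- The Boolean-valued axiom of comprehension. -/
theorem bSet_axiom_of_comprehension {𝔹 : Type u} [CompleteBooleanAlgebra 𝔹]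
    (ϕ : bSet 𝔹 → 𝔹) (x : bSet 𝔹)
    (H_congr : ∀ a b : bSet 𝔹, bvEq a b ⊓ ϕ a ≤ ϕ b) {Γ : 𝔹} :
    Γ ≤ ⨆ y : bSet 𝔹, bvSubset y x ⊓ ⨅ z : bSet 𝔹,
      biimp (bvMem z y) (bvMem z x ⊓ ϕ z) := by
  obtain ⟨α, A, B⟩ := x
  refine le_trans le_top (le_iSup_of_le (bSet.mk α A (fun a => B a ⊓ ϕ (A a))) ?_)
  refine le_inf ?_ (le_iInf fun z => le_inf ?_ ?_)
  · simp only [bvSubset, bvMem]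
    refine le_iInf fun a => ?_
    rw [le_himp_iff, top_inf_eq]
    exact le_iSup_of_le a
      (le_inf inf_le_left (by rw [bvEq_refl]; exact le_top))
  · rw [le_himp_iff, top_inf_eq]
    simp only [bvMem]
    refine iSup_le fun a => le_inf (le_iSup_of_le a (inf_le_inf inf_le_left le_rfl)) ?_
    have h : (B a ⊓ ϕ (A a)) ⊓ bvEq z (A a) ≤ bvEq (A a) z ⊓ ϕ (A a) := by
      rw [bvEq_symm z (A a)]
      exact le_inf inf_le_right (le_trans inf_le_left inf_le_right)
    exact h.trans (H_congr (A a) z)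
  · rw [le_himp_iff, top_inf_eq]
    simp only [bvMem]
    rw [iSup_inf_eq]
    refine iSup_le fun a => le_iSup_of_le a ?_
    refine le_inf (le_inf (le_trans inf_le_left inf_le_left) ?_)
      (le_trans inf_le_left inf_le_right)
    exact le_trans (inf_le_inf inf_le_right le_rfl) (H_congr z (A a))
end
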